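/- arXiv:1811.06736 — 5 statements merged into one kernel-verified Lean document; each statement's English description precedes it below -/
import Mathlib

section
/- Let 0 < η ≤ 1/(2k), w_0 > 0, H > 0, and let w be a contract with w(1) ≥ w_0, w(i+1) ≥ w(i) for all i ∈ {1,...,k−1}, and w(i) ≤ H for all i. Define w' by w'(1) = w_0·exp(η·⌈log(w(1)/w_0)/η⌉) and w'(i+1) = w'(i)·exp(η·⌈log(w(i+1)/w(i))/η⌉) for i ∈ {1,...,k−1}. Then w_0 ≤ w'(i) ≤ 2H for every i ∈ {1,...,k}, i.e., w' is 2H-bounded. -/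
/-- If `η ≤ 1/(2k)` and the original contract `w` is nondecreasing with wages in `[w₀, H]`,
then the rounded contract `w'` is `2H`-bounded: `w₀ ≤ w'(i) ≤ 2H` for every `i ∈ {1,…,k}`. -/
theorem rounded_contract_two_H_bounded (k : ℕ) (η w₀ H : ℝ)
    (hη : 0 < η) (hηk : η ≤ 1 / (2 * k)) (hw₀ : 0 < w₀) (hH : 0 < H) (w w' : ℕ → ℝ)
    (hw1 : w₀ ≤ w 1)
    (hwmono : ∀ i ∈ Finset.Icc 1 (k - 1), w i ≤ w (i + 1))
    (hwH : ∀ i ∈ Finset.Icc 1 k, w i ≤ H)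
    (hw'1 : w' 1 = w₀ * Real.exp (η * (⌈Real.log (w 1 / w₀) / η⌉ : ℝ)))
    (hw'rec : ∀ i ∈ Finset.Icc 1 (k - 1),
      w' (i + 1) = w' i * Real.exp (η * (⌈Real.log (w (i + 1) / w i) / η⌉ : ℝ))) :
    ∀ i ∈ Finset.Icc 1 k, w₀ ≤ w' i ∧ w' i ≤ 2 * H := by
  -- key bound on the rounding factor
  have key : ∀ a b : ℝ, 0 < a → a ≤ b →
      b / a ≤ Real.exp (η * (⌈Real.log (b / a) / η⌉ : ℝ)) ∧
      Real.exp (η * (⌈Real.log (b / a) / η⌉ : ℝ)) ≤ (b / a) * Real.exp η := by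
    intro a b ha hab
    have hb : 0 < b := lt_of_lt_of_le ha hab
    have hr : 0 < b / a := div_pos hb ha
    set x := Real.log (b / a) with hx
    have hxc : x ≤ η * (⌈x / η⌉ : ℝ) := by
      have h1 : x / η ≤ (⌈x / η⌉ : ℝ) := Int.le_ceil _
      have := (div_le_iff₀ hη).mp h1
      linarith [this]
    have hxc2 : η * (⌈x / η⌉ : ℝ) ≤ x + η := by
      have h2 : (⌈x / η⌉ : ℝ) < x / η + 1 := Int.ceil_lt_add_one _
      have h3 : η * (⌈x / η⌉ : ℝ) < η * (x / η + 1) :=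
        mul_lt_mul_of_pos_left h2 hη
      have h4 : η * (x / η + 1) = x + η := by field_simp
      linarith [h3, h4.le]
    constructor
    · calc b / a = Real.exp x := (Real.exp_log hr).symm
        _ ≤ _ := Real.exp_le_exp.2 hxc
    · calc Real.exp (η * (⌈x / η⌉ : ℝ)) ≤ Real.exp (x + η) := Real.exp_le_exp.2 hxc2
        _ = (b / a) * Real.exp η := by rw [Real.exp_add, Real.exp_log hr]
  -- main induction
  have main : ∀ i, 1 ≤ i → i ≤ k →
      w₀ ≤ w i ∧ w i ≤ w' i ∧ w' i ≤ w i * Real.exp (i * η) := by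
    intro i hi1
    induction i, hi1 using Nat.le_induction with
    | base =>
      intro _
      have h := key w₀ (w 1) hw₀ hw1
      refine ⟨hw1, ?_, ?_⟩
      · rw [hw'1]
        have := mul_le_mul_of_nonneg_left h.1 hw₀.le
        calc w 1 = w₀ * (w 1 / w₀) := by field_simp
          _ ≤ _ := this
      · rw [hw'1]
        have := mul_le_mul_of_nonneg_left h.2 hw₀.le
        calc w₀ * Real.exp (η * (⌈Real.log (w 1 / w₀) / η⌉ : ℝ))
            ≤ w₀ * ((w 1 / w₀) * Real.exp η) := this
          _ = w 1 * Real.exp ((1 : ℕ) * η) := by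
              push_cast; rw [one_mul]; field_simp
    | succ i hi ih =>
      intro hik
      have hik' : i ≤ k := by omega
      have himem : i ∈ Finset.Icc 1 (k - 1) := by
        simp only [Finset.mem_Icc]; omega
      obtain ⟨h0, h1, h2⟩ := ih hik'
      have hwi : 0 < w i := lt_of_lt_of_le hw₀ h0
      have hmono := hwmono i himem
      have h := key (w i) (w (i + 1)) hwi hmono
      have hrec := hw'rec i himem
      have hw'pos : 0 < w' i := lt_of_lt_of_le hwi h1
      refine ⟨le_trans h0 hmono, ?_, ?_⟩
      · rw [hrec]
        calc w (i + 1) = w i * (w (i + 1) / w i) := by field_simp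
          _ ≤ w' i * (w (i + 1) / w i) := by
              exact mul_le_mul_of_nonneg_right h1
                (div_nonneg (le_trans hw₀.le (le_trans h0 hmono)) hwi.le)
          _ ≤ w' i * Real.exp (η * (⌈Real.log (w (i + 1) / w i) / η⌉ : ℝ)) := by
              apply mul_le_mul_of_nonneg_left h.1 hw'pos.le
      · rw [hrec]
        calc w' i * Real.exp (η * (⌈Real.log (w (i + 1) / w i) / η⌉ : ℝ))
            ≤ w' i * ((w (i + 1) / w i) * Real.exp η) := by
              apply mul_le_mul_of_nonneg_left h.2 hw'pos.le
          _ ≤ (w i * Real.exp (i * η)) * ((w (i + 1) / w i) * Real.exp η) := by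
              exact mul_le_mul_of_nonneg_right h2 (mul_nonneg
                (div_nonneg (le_trans hw₀.le (le_trans h0 hmono)) hwi.le)
                (Real.exp_pos _).le)
          _ = w (i + 1) * (Real.exp (i * η) * Real.exp η) := by
              field_simp
          _ = w (i + 1) * Real.exp ((i + 1 : ℕ) * η) := by
              rw [← Real.exp_add]; push_cast; ring_nf
  intro i hi
  simp only [Finset.mem_Icc] at hi
  obtain ⟨h0, h1, h2⟩ := main i hi.1 hi.2
  have hk1 : (1 : ℝ) ≤ (k : ℝ) := by
    have : 1 ≤ k := le_trans hi.1 hi.2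
    exact_mod_cast this
  have hkpos : (0 : ℝ) < (k : ℝ) := by linarith
  have hkη : (k : ℝ) * η ≤ 1 / 2 := by
    have : (k : ℝ) * η ≤ (k : ℝ) * (1 / (2 * k)) :=
      mul_le_mul_of_nonneg_left hηk (by positivity)
    have he : (k : ℝ) * (1 / (2 * k)) = 1 / 2 := by field_simp
    linarith [this, he.le]
  have hiη : (i : ℝ) * η ≤ 1 / 2 := by
    have hik : (i : ℝ) ≤ (k : ℝ) := by exact_mod_cast hi.2
    nlinarith
  have hexp : Real.exp ((i : ℝ) * η) ≤ 2 := by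
    calc Real.exp ((i : ℝ) * η) ≤ Real.exp (Real.log 2) := by
          apply Real.exp_le_exp.2
          have := Real.log_two_gt_d9
          linarith
      _ = 2 := Real.exp_log (by norm_num)
  have hwiH : w i ≤ H := hwH i (by simp only [Finset.mem_Icc]; exact hi)
  have hwi0 : 0 < w i := lt_of_lt_of_le hw₀ h0
  refine ⟨le_trans h0 h1, ?_⟩
  calc w' i ≤ w i * Real.exp ((i : ℝ) * η) := h2
    _ ≤ H * 2 := by
        apply mul_le_mul hwiH hexp (Real.exp_pos _).le hH.le
    _ = 2 * H := by ring
end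

section
/- Let u : (0,∞) → ℝ be nondecreasing and differentiable with x ↦ x·u'(x) monotone nondecreasing on (0,∞). Let w and w' be contracts with 0 < w(i) ≤ w'(i) for all i ∈ {1,...,k}, with w(i) nondecreasing in i, and with w'(i+1)/w(i+1) ≥ w'(i)/w(i) for all i ∈ {1,...,k−1}. Then the sequence i ↦ u(w'(i)) − u(w(i)) is monotone nondecreasing in i. -/
lemma gap_mono_aux (u u' : ℝ → ℝ)
    (hd : ∀ x > (0 : ℝ), HasDerivAt u (u' x) x)
    (hbra : MonotoneOn (fun x : ℝ => x * u' x) (Set.Ioi (0 : ℝ)))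
    (r : ℝ) (hr : 1 ≤ r) {a b : ℝ} (ha : 0 < a) (hab : a ≤ b) :
    u (r * a) - u a ≤ u (r * b) - u b := by
  set g : ℝ → ℝ := fun x => u (r * x) - u x with hg
  have hb : 0 < b := lt_of_lt_of_le ha hab
  have hgd : ∀ x ∈ Set.Ioi (0 : ℝ), HasDerivAt g (u' (r * x) * r - u' x) x := by
    intro x hx
    have hx0 : (0 : ℝ) < x := hx
    have hrx : 0 < r * x := mul_pos (lt_of_lt_of_le one_pos hr) hx0
    have h1 : HasDerivAt (fun x => u (r * x)) (u' (r * x) * r) x :=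
      (hd (r * x) hrx).comp x (by simpa using (hasDerivAt_id x).const_mul r)
    exact h1.sub (hd x hx0)
  have hmono : MonotoneOn g (Set.Ioi (0 : ℝ)) := by
    apply monotoneOn_of_deriv_nonneg (convex_Ioi 0)
    · intro x hx
      exact ((hgd x hx).continuousAt).continuousWithinAt
    · rw [interior_Ioi]
      intro x hx
      exact (hgd x hx).differentiableAt.differentiableWithinAt
    · rw [interior_Ioi]
      intro x hx
      rw [(hgd x hx).deriv]
      have hx0 : (0 : ℝ) < x := hx
      have hrx : 0 < r * x := mul_pos (lt_of_lt_of_le one_pos hr) hx0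
      have hle : x ≤ r * x := le_mul_of_one_le_left hx0.le hr
      have := hbra (Set.mem_Ioi.mpr hx0) (Set.mem_Ioi.mpr hrx) hle
      simp only at this
      have key : x * 0 ≤ x * (u' (r * x) * r - u' x) := by nlinarith
      have := le_of_mul_le_mul_left key hx0
      linarith
  exact hmono (Set.mem_Ioi.mpr ha) (Set.mem_Ioi.mpr hb) hab

/-- Under bounded risk aversion, if `w ≤ w'` pointwise, `w` is nondecreasing, and the
ratios `w'(i)/w(i)` are nondecreasing in `i`, then `i ↦ u(w'(i)) − u(w(i))` is
monotone nondecreasing on `{1,…,k}`. -/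
theorem utility_gap_monotone (k : ℕ) (u u' : ℝ → ℝ)
    (humono : MonotoneOn u (Set.Ioi (0 : ℝ)))
    (hd : ∀ x > (0 : ℝ), HasDerivAt u (u' x) x)
    (hbra : MonotoneOn (fun x : ℝ => x * u' x) (Set.Ioi (0 : ℝ)))
    (w w' : ℕ → ℝ)
    (hw : ∀ i ∈ Finset.Icc 1 k, 0 < w i ∧ w i ≤ w' i)
    (hwmono : ∀ i ∈ Finset.Icc 1 (k - 1), w i ≤ w (i + 1))
    (hratio : ∀ i ∈ Finset.Icc 1 (k - 1), w' i / w i ≤ w' (i + 1) / w (i + 1)) :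
    ∀ i ∈ Finset.Icc 1 (k - 1),
      u (w' i) - u (w i) ≤ u (w' (i + 1)) - u (w (i + 1)) := by
  intro i hi
  simp only [Finset.mem_Icc] at hi
  have hik : i ∈ Finset.Icc 1 k := Finset.mem_Icc.mpr ⟨hi.1, by omega⟩
  have hik1 : i + 1 ∈ Finset.Icc 1 k := Finset.mem_Icc.mpr ⟨by omega, by omega⟩
  obtain ⟨hwi, hwi'⟩ := hw i hik
  obtain ⟨hwi1, hwi1'⟩ := hw (i + 1) hik1
  have hi' : i ∈ Finset.Icc 1 (k - 1) := Finset.mem_Icc.mpr hi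
  have hmono := hwmono i hi'
  have hrat := hratio i hi'
  set r := w' i / w i with hr
  set r' := w' (i + 1) / w (i + 1) with hr'
  have hr1 : 1 ≤ r := (one_le_div hwi).mpr hwi'
  have hr1' : 1 ≤ r' := (one_le_div hwi1).mpr hwi1'
  have he1 : w' i = r * w i := by rw [hr, div_mul_cancel₀ _ hwi.ne']
  have he2 : w' (i + 1) = r' * w (i + 1) := by rw [hr', div_mul_cancel₀ _ hwi1.ne']
  have step1 : u (r * w i) - u (w i) ≤ u (r * w (i + 1)) - u (w (i + 1)) :=
    gap_mono_aux u u' hd hbra r hr1 hwi hmono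
  have step2 : u (r * w (i + 1)) ≤ u (r' * w (i + 1)) := by
    apply humono
    · exact Set.mem_Ioi.mpr (mul_pos (lt_of_lt_of_le one_pos hr1) hwi1)
    · exact Set.mem_Ioi.mpr (mul_pos (lt_of_lt_of_le one_pos hr1') hwi1)
    · exact mul_le_mul_of_nonneg_right hrat hwi1.le
  rw [he1, he2]
  linarith
end

section
/- Consider effort levels {0,1,...,n}, each effort e having a probability distribution f_e over the k outcomes and a cost c(e), such that for all efforts e > e' the distribution f_e first-order stochastically dominates f_{e'} (for every j, Σ_{i=j}^k f_e(i) ≥ Σ_{i=j}^k f_{e'}(i)). Let u : (0,∞) → ℝ be nondecreasing and differentiable with x ↦ x·u'(x) monotone nondecreasing. Let w and w' be contracts with 0 < w(i) ≤ w'(i) for all i, with w(i) nondecreasing in i, and with w'(i+1)/w(i+1) ≥ w'(i)/w(i) for all i ∈ {1,...,k−1}. Let e = max{e : e maximizes U(w,·)} and e' = max{e : e maximizes U(w',·)}, where U(w,e) = Σ_{j=1}^k f_e(j)·u(w(j)) − c(e). Then e' ≥ e, i.e., the effort level the agent chooses can only increase from w to w'. -/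
/-- The agent's utility from contract `w` at effort `e`: `∑ⱼ f_e(j)·u(w(j)) − c(e)`. -/
def agentUtility (k : ℕ) (f : ℕ → ℕ → ℝ) (c : ℕ → ℝ) (u : ℝ → ℝ)
    (w : ℕ → ℝ) (e : ℕ) : ℝ :=
  (∑ j ∈ Finset.Icc 1 k, f e j * u (w j)) - c e

private lemma tele_sum (g : ℕ → ℝ) : ∀ j, 1 ≤ j →
    g j = g 1 + ∑ i ∈ Finset.Icc 2 j, (g i - g (i - 1)) := by
  intro j hj
  induction j with
  | zero => omega
  | succ m ih =>
    rcases Nat.lt_or_ge 1 (m + 1) with h | h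
    · have hm : 1 ≤ m := by omega
      rw [Finset.sum_Icc_succ_top (by omega : 2 ≤ m + 1)]
      have h2 := ih hm
      simp only [Nat.add_sub_cancel]
      linarith
    · have hm0 : m = 0 := by omega
      subst hm0; simp

private lemma abel_sum (k : ℕ) (p g : ℕ → ℝ) :
    ∑ j ∈ Finset.Icc 1 k, p j * g j
      = (∑ i ∈ Finset.Icc 1 k, p i) * g 1
        + ∑ j ∈ Finset.Icc 2 k, (∑ i ∈ Finset.Icc j k, p i) * (g j - g (j - 1)) := by
  have h1 : ∑ j ∈ Finset.Icc 1 k, p j * g j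
      = ∑ j ∈ Finset.Icc 1 k,
          (p j * g 1 + ∑ i ∈ Finset.Icc 2 j, p j * (g i - g (i - 1))) := by
    refine Finset.sum_congr rfl fun j hj => ?_
    rw [← Finset.mul_sum, ← mul_add, ← tele_sum g j (Finset.mem_Icc.mp hj).1]
  rw [h1, Finset.sum_add_distrib, ← Finset.sum_mul]
  congr 1
  rw [Finset.sum_comm' (t' := Finset.Icc 2 k) (s' := fun i => Finset.Icc i k)
      (by intro jj ii; simp only [Finset.mem_Icc]; omega)]
  exact Finset.sum_congr rfl fun i _ => (Finset.sum_mul _ _ _).symm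

private lemma diff_mono (u u' : ℝ → ℝ)
    (humono : MonotoneOn u (Set.Ioi (0 : ℝ)))
    (hd : ∀ x > (0 : ℝ), HasDerivAt u (u' x) x)
    (hbra : MonotoneOn (fun x : ℝ => x * u' x) (Set.Ioi (0 : ℝ)))
    (a b A B : ℝ) (ha : 0 < a) (hab : a ≤ b) (haA : a ≤ A) (hbB : b ≤ B)
    (hr : A / a ≤ B / b) :
    u A - u a ≤ u B - u b := by
  have hb : 0 < b := lt_of_lt_of_le ha hab
  have hA : 0 < A := lt_of_lt_of_le ha haA
  have hB : 0 < B := lt_of_lt_of_le hb hbB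
  set h : ℝ → ℝ := fun x => u (x * A) - u (x * a) with hh
  have hderiv : ∀ x > (0 : ℝ), HasDerivAt h (u' (x * A) * A - u' (x * a) * a) x := by
    intro x hx
    exact ((hd (x * A) (by positivity)).comp x (hasDerivAt_mul_const A)).sub
      ((hd (x * a) (by positivity)).comp x (hasDerivAt_mul_const a))
  have hmono : MonotoneOn h (Set.Ioi (0 : ℝ)) := by
    apply monotoneOn_of_deriv_nonneg (convex_Ioi 0)
    · intro x hx
      exact ((hderiv x hx).continuousAt).continuousWithinAt
    · intro x hx
      rw [interior_Ioi] at hx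
      exact (hderiv x hx).differentiableAt.differentiableWithinAt
    · intro x hx
      rw [interior_Ioi] at hx
      have hx0 : (0:ℝ) < x := hx
      rw [(hderiv x hx).deriv]
      have h1 : x * a ≤ x * A := by nlinarith
      have h2 := hbra (Set.mem_Ioi.mpr (by positivity : (0:ℝ) < x * a))
        (Set.mem_Ioi.mpr (by positivity : (0:ℝ) < x * A)) h1
      simp only at h2
      nlinarith [h2, hx0]
  have hba : (1 : ℝ) ≤ b / a := (one_le_div ha).mpr hab
  have h1 : h 1 ≤ h (b / a) :=
    hmono (Set.mem_Ioi.mpr one_pos) (Set.mem_Ioi.mpr (by positivity)) hba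
  have hba' : b / a * a = b := div_mul_cancel₀ b (ne_of_gt ha)
  have hrr : A * b ≤ B * a := (div_le_div_iff₀ ha hb).mp hr
  have hAB : b / a * A ≤ B := by
    rw [div_mul_eq_mul_div, div_le_iff₀ ha]
    nlinarith
  have h2 : u (b / a * A) ≤ u B :=
    humono (Set.mem_Ioi.mpr (by positivity)) (Set.mem_Ioi.mpr hB) hAB
  simp only [hh, one_mul, hba'] at h1
  linarith

/-- Under FOSD and bounded risk aversion, passing from `w` to the pointwise-larger
contract `w'` (with nondecreasing wage ratios), the agent's chosen effort level — the
largest maximizer of her utility — can only increase. -/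
theorem effort_only_increases (k n : ℕ) (f : ℕ → ℕ → ℝ) (c : ℕ → ℝ) (u u' : ℝ → ℝ)
    (hprob : ∀ e ≤ n, (∀ i ∈ Finset.Icc 1 k, 0 ≤ f e i) ∧
      ∑ i ∈ Finset.Icc 1 k, f e i = 1)
    (hfosd : ∀ e ≤ n, ∀ e' ≤ n, e' < e → ∀ j ∈ Finset.Icc 1 k,
      ∑ i ∈ Finset.Icc j k, f e' i ≤ ∑ i ∈ Finset.Icc j k, f e i)
    (humono : MonotoneOn u (Set.Ioi (0 : ℝ)))
    (hd : ∀ x > (0 : ℝ), HasDerivAt u (u' x) x)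
    (hbra : MonotoneOn (fun x : ℝ => x * u' x) (Set.Ioi (0 : ℝ)))
    (w w' : ℕ → ℝ)
    (hw : ∀ i ∈ Finset.Icc 1 k, 0 < w i ∧ w i ≤ w' i)
    (hwmono : ∀ i ∈ Finset.Icc 1 (k - 1), w i ≤ w (i + 1))
    (hratio : ∀ i ∈ Finset.Icc 1 (k - 1), w' i / w i ≤ w' (i + 1) / w (i + 1))
    (e e' : ℕ) (he : e ≤ n) (he' : e' ≤ n)
    (heopt : ∀ e₂ ≤ n, agentUtility k f c u w e₂ ≤ agentUtility k f c u w e)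
    (hemax : ∀ e₂ ≤ n, agentUtility k f c u w e₂ = agentUtility k f c u w e → e₂ ≤ e)
    (he'opt : ∀ e₂ ≤ n, agentUtility k f c u w' e₂ ≤ agentUtility k f c u w' e')
    (he'max : ∀ e₂ ≤ n, agentUtility k f c u w' e₂ = agentUtility k f c u w' e' →
      e₂ ≤ e') :
    e ≤ e' := by
  by_contra hcon
  push_neg at hcon
  have hk : 1 ≤ k := by
    by_contra hk0
    have h0 : k = 0 := by omega
    have h1 := (hprob 0 (Nat.zero_le n)).2
    rw [h0] at h1
    simp at h1
  have hstrict : agentUtility k f c u w' e < agentUtility k f c u w' e' := by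
    rcases lt_or_eq_of_le (he'opt e he) with h | h
    · exact h
    · exact absurd (he'max e he h) (by omega)
  have hA := heopt e' he'
  set g : ℕ → ℝ := fun j => u (w' j) - u (w j) with hg
  set p : ℕ → ℝ := fun j => f e j - f e' j with hp
  have hneg : ∑ j ∈ Finset.Icc 1 k, p j * g j < 0 := by
    have hx : ∑ j ∈ Finset.Icc 1 k, p j * g j
        = ((∑ j ∈ Finset.Icc 1 k, f e j * u (w' j)) - c e)
          - ((∑ j ∈ Finset.Icc 1 k, f e' j * u (w' j)) - c e')
          - (((∑ j ∈ Finset.Icc 1 k, f e j * u (w j)) - c e)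
            - ((∑ j ∈ Finset.Icc 1 k, f e' j * u (w j)) - c e')) := by
      simp only [hp, hg, sub_mul, mul_sub, Finset.sum_sub_distrib]
      ring
    rw [hx]
    unfold agentUtility at hstrict hA
    linarith
  have hnonneg : 0 ≤ ∑ j ∈ Finset.Icc 1 k, p j * g j := by
    rw [abel_sum]
    have hzero : ∑ i ∈ Finset.Icc 1 k, p i = 0 := by
      simp only [hp, Finset.sum_sub_distrib, (hprob e he).2, (hprob e' he').2, sub_self]
    rw [hzero, zero_mul, zero_add]
    apply Finset.sum_nonneg
    intro j hj
    rw [Finset.mem_Icc] at hj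
    apply mul_nonneg
    · have hT := hfosd e he e' he' hcon j (Finset.mem_Icc.mpr ⟨by omega, hj.2⟩)
      simp only [hp, Finset.sum_sub_distrib]
      linarith
    · have hj1 : j - 1 ∈ Finset.Icc 1 (k - 1) := Finset.mem_Icc.mpr ⟨by omega, by omega⟩
      have hjm : j - 1 + 1 = j := by omega
      have hjk : j ∈ Finset.Icc 1 k := Finset.mem_Icc.mpr ⟨by omega, hj.2⟩
      have hj1k : j - 1 ∈ Finset.Icc 1 k := Finset.mem_Icc.mpr ⟨by omega, by omega⟩
      have key := diff_mono u u' humono hd hbra (w (j - 1)) (w j) (w' (j - 1)) (w' j)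
        (hw _ hj1k).1 (by have := hwmono _ hj1; rwa [hjm] at this)
        (hw _ hj1k).2 (hw _ hjk).2
        (by have := hratio _ hj1; rwa [hjm] at this)
      simp only [hg]
      linarith
  linarith
end

section
/- Let 0 < π(1) < π(2) < ... < π(k) ≤ H be the principal's profits from the k outcomes, and let 0 < η < 1/k. Let w be a monotone-smooth contract with w(i) ≤ H for all i, and let w' be a contract with w(i) ≤ w'(i) ≤ exp(η·i)·w(i) for all i ∈ {1,...,k}. Let e and e' be effort levels with e' ≥ e, whose outcome distributions satisfy FOSD: Σ_{i=j}^k f_{e'}(i) ≥ Σ_{i=j}^k f_{e}(i) for every j. Then Σ_{i=1}^k f_e(i)·(π(i) − w(i)) ≤ Σ_{i=1}^k f_{e'}(i)·(π(i) − w'(i)) + 2·k·H·η. -/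
private lemma abel_identity (g S : ℕ → ℝ) :
    ∀ n, 1 ≤ n → ∑ i ∈ Finset.Icc 1 n, (S i - S (i + 1)) * g i =
      S 1 * g 1 - S (n + 1) * g n + ∑ i ∈ Finset.Icc 2 n, S i * (g i - g (i - 1)) := by
  intro n hn
  induction n with
  | zero => omega
  | succ m ih =>
    rcases Nat.eq_zero_or_pos m with hm | hm
    · subst hm; simp; ring
    · rw [Finset.sum_Icc_succ_top (by omega : 1 ≤ m + 1),
        Finset.sum_Icc_succ_top (by omega : 2 ≤ m + 1), ih hm]
      have : (m + 1 : ℕ) - 1 = m := by omega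
      rw [this]; ring

private lemma fosd_sum_le (k : ℕ) (g p q : ℕ → ℝ)
    (hg : ∀ i ∈ Finset.Icc 1 (k - 1), g i ≤ g (i + 1))
    (hsum : ∑ i ∈ Finset.Icc 1 k, p i = ∑ i ∈ Finset.Icc 1 k, q i)
    (htail : ∀ j ∈ Finset.Icc 1 k, ∑ i ∈ Finset.Icc j k, p i ≤ ∑ i ∈ Finset.Icc j k, q i)
    (hk : 1 ≤ k) :
    ∑ i ∈ Finset.Icc 1 k, p i * g i ≤ ∑ i ∈ Finset.Icc 1 k, q i * g i := by
  set S : ℕ → ℝ := fun j => ∑ i ∈ Finset.Icc j k, (q i - p i) with hS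
  have hstep : ∀ i ∈ Finset.Icc 1 k, q i - p i = S i - S (i + 1) := by
    intro i hi
    simp only [Finset.mem_Icc] at hi
    have hins : Finset.Icc i k = insert i (Finset.Icc (i + 1) k) := by
      ext j; simp only [Finset.mem_Icc, Finset.mem_insert]; omega
    have hSi : S i = (q i - p i) + S (i + 1) := by
      simp only [hS, hins]
      rw [Finset.sum_insert (by simp)]
    linarith
  have key : ∑ i ∈ Finset.Icc 1 k, (q i - p i) * g i =
      S 1 * g 1 - S (k + 1) * g k + ∑ i ∈ Finset.Icc 2 k, S i * (g i - g (i - 1)) := by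
    rw [← abel_identity g S k hk]
    exact Finset.sum_congr rfl fun i hi => by rw [hstep i hi]
  have hS1 : S 1 = 0 := by
    simp only [hS]
    rw [Finset.sum_sub_distrib, hsum]; ring
  have hSk1 : S (k + 1) = 0 := by simp [hS]
  have hterms : 0 ≤ ∑ i ∈ Finset.Icc 2 k, S i * (g i - g (i - 1)) := by
    apply Finset.sum_nonneg
    intro i hi
    simp only [Finset.mem_Icc] at hi
    have h1 : 0 ≤ S i := by
      have := htail i (Finset.mem_Icc.mpr ⟨by omega, hi.2⟩)
      simp only [hS, Finset.sum_sub_distrib]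
      linarith
    have h2 : g (i - 1) ≤ g i := by
      have := hg (i - 1) (Finset.mem_Icc.mpr ⟨by omega, by omega⟩)
      have hi1 : i - 1 + 1 = i := by omega
      rwa [hi1] at this
    exact mul_nonneg h1 (by linarith)
  have : 0 ≤ ∑ i ∈ Finset.Icc 1 k, (q i - p i) * g i := by
    rw [key, hS1, hSk1]; simpa using hterms
  have hsplit : ∑ i ∈ Finset.Icc 1 k, (q i - p i) * g i =
      (∑ i ∈ Finset.Icc 1 k, q i * g i) - ∑ i ∈ Finset.Icc 1 k, p i * g i := by
    rw [← Finset.sum_sub_distrib]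
    exact Finset.sum_congr rfl fun i _ => by ring
  linarith

private lemma exp_le_one_add_two_mul {x : ℝ} (h0 : 0 ≤ x) (h1 : x ≤ 1) :
    Real.exp x ≤ 1 + 2 * x := by
  have hc := convexOn_exp.2 (Set.mem_univ (0 : ℝ)) (Set.mem_univ (1 : ℝ))
    (by linarith : (0:ℝ) ≤ 1 - x) h0 (by ring)
  simp only [smul_eq_mul, mul_zero, mul_one, zero_add, Real.exp_zero] at hc
  have he : Real.exp 1 < 2.7182818286 := Real.exp_one_lt_d9
  nlinarith

/-- If `w` is a monotone-smooth contract with wages at most `H`, `w'` satisfies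
`w(i) ≤ w'(i) ≤ exp(η·i)·w(i)`, and effort `e' ≥ e` stochastically dominates `e`, then the
principal's expected net profit under `(w, e)` exceeds that under `(w', e')` by at most
`2kHη`. -/
theorem principal_profit_discretization_loss (k : ℕ) (H η : ℝ)
    (π w w' : ℕ → ℝ) (f : ℕ → ℕ → ℝ) (e e' : ℕ)
    (hπ1 : 0 < π 1) (hπmono : ∀ i ∈ Finset.Icc 1 (k - 1), π i < π (i + 1))
    (hπH : π k ≤ H)
    (hη : 0 < η) (hηk : η < 1 / k)
    (hms : ∀ i ∈ Finset.Icc 1 (k - 1),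
      0 ≤ w (i + 1) - w i ∧ w (i + 1) - w i ≤ π (i + 1) - π i)
    (hwH : ∀ i ∈ Finset.Icc 1 k, w i ≤ H)
    (hw' : ∀ i ∈ Finset.Icc 1 k, w i ≤ w' i ∧ w' i ≤ Real.exp (η * i) * w i)
    (hee' : e ≤ e')
    (hpe : (∀ i ∈ Finset.Icc 1 k, 0 ≤ f e i) ∧ ∑ i ∈ Finset.Icc 1 k, f e i = 1)
    (hpe' : (∀ i ∈ Finset.Icc 1 k, 0 ≤ f e' i) ∧ ∑ i ∈ Finset.Icc 1 k, f e' i = 1)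
    (hfosd : ∀ j ∈ Finset.Icc 1 k,
      ∑ i ∈ Finset.Icc j k, f e i ≤ ∑ i ∈ Finset.Icc j k, f e' i) :
    ∑ i ∈ Finset.Icc 1 k, f e i * (π i - w i) ≤
      (∑ i ∈ Finset.Icc 1 k, f e' i * (π i - w' i)) + 2 * k * H * η := by
  rcases Nat.eq_zero_or_pos k with hk | hk
  · subst hk; simp
  -- basic facts
  have hknn : (1 : ℝ) ≤ (k : ℝ) := by exact_mod_cast hk
  have hηk1 : η * k ≤ 1 := by
    have : η * k < 1 := by
      rw [div_eq_inv_mul, mul_one] at hηk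
      calc η * k < (k : ℝ)⁻¹ * k := by
            apply mul_lt_mul_of_pos_right hηk (by linarith)
        _ = 1 := by field_simp
    linarith
  have hwnn : ∀ i ∈ Finset.Icc 1 k, 0 ≤ w i := by
    intro i hi
    have hi' := Finset.mem_Icc.mp hi
    have hpos : 0 < η * i := by
      have : (1 : ℝ) ≤ (i : ℝ) := by exact_mod_cast hi'.1
      nlinarith
    have h1 : 1 < Real.exp (η * i) := by
      have := Real.add_one_le_exp (η * i)
      linarith
    have h2 := (hw' i hi).1
    have h3 := (hw' i hi).2
    nlinarith
  have hHnn : 0 ≤ H := le_trans (hwnn 1 (Finset.mem_Icc.mpr ⟨le_refl 1, hk⟩))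
    (hwH 1 (Finset.mem_Icc.mpr ⟨le_refl 1, hk⟩))
  -- bound on w' - w
  have hdw : ∀ i ∈ Finset.Icc 1 k, w' i - w i ≤ 2 * k * H * η := by
    intro i hi
    have hi' := Finset.mem_Icc.mp hi
    have hik : (i : ℝ) ≤ (k : ℝ) := by exact_mod_cast hi'.2
    have hbd : Real.exp (η * i) ≤ Real.exp (η * k) := by
      apply Real.exp_le_exp.mpr
      nlinarith
    have hexp : Real.exp (η * k) ≤ 1 + 2 * (η * k) :=
      exp_le_one_add_two_mul (by positivity) hηk1
    have h2 := (hw' i hi).2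
    have h3 := hwnn i hi
    have h4 := hwH i hi
    have h5 : w' i ≤ (1 + 2 * (η * k)) * w i := by
      calc w' i ≤ Real.exp (η * i) * w i := h2
        _ ≤ (1 + 2 * (η * k)) * w i := by
            apply mul_le_mul_of_nonneg_right _ h3
            exact le_trans hbd hexp
    have h6 : 2 * (η * (k : ℝ)) * w i ≤ 2 * (η * (k : ℝ)) * H :=
      mul_le_mul_of_nonneg_left h4 (by positivity)
    nlinarith
  -- FOSD step: π - w is nondecreasing
  have step1 : ∑ i ∈ Finset.Icc 1 k, f e i * (π i - w i) ≤
      ∑ i ∈ Finset.Icc 1 k, f e' i * (π i - w i) := by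
    apply fosd_sum_le k (fun i => π i - w i) (f e) (f e') _ (by rw [hpe.2, hpe'.2]) hfosd hk
    intro i hi
    have := (hms i hi).2
    show π i - w i ≤ π (i + 1) - w (i + 1)
    linarith
  -- wage perturbation step
  have step2 : ∑ i ∈ Finset.Icc 1 k, f e' i * (π i - w i) ≤
      (∑ i ∈ Finset.Icc 1 k, f e' i * (π i - w' i)) + 2 * k * H * η := by
    have hsplit : ∑ i ∈ Finset.Icc 1 k, f e' i * (π i - w i) =
        (∑ i ∈ Finset.Icc 1 k, f e' i * (π i - w' i)) +
          ∑ i ∈ Finset.Icc 1 k, f e' i * (w' i - w i) := by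
      rw [← Finset.sum_add_distrib]
      exact Finset.sum_congr rfl fun i _ => by ring
    rw [hsplit]
    have hbound : ∑ i ∈ Finset.Icc 1 k, f e' i * (w' i - w i) ≤ 2 * k * H * η := by
      calc ∑ i ∈ Finset.Icc 1 k, f e' i * (w' i - w i)
          ≤ ∑ i ∈ Finset.Icc 1 k, f e' i * (2 * k * H * η) := by
            apply Finset.sum_le_sum
            intro i hi
            exact mul_le_mul_of_nonneg_left (hdw i hi) (hpe'.1 i hi)
        _ = (∑ i ∈ Finset.Icc 1 k, f e' i) * (2 * k * H * η) := by
            rw [Finset.sum_mul]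
        _ = 2 * k * H * η := by rw [hpe'.2, one_mul]
    linarith
  linarith
end

section
/- Consider the principal-agent model with k outcomes with profits 0 < π(1) < ... < π(k) ≤ H, minimum wage w_0 > 0, effort levels {0,1,...,n} with distributions f_e over outcomes and costs c(e) satisfying FOSD (for e > e' and every j, Σ_{i=j}^k f_e(i) ≥ Σ_{i=j}^k f_{e'}(i)), and an agent whose utility from wages u : (0,∞) → ℝ is nondecreasing and differentiable with x ↦ x·u'(x) monotone nondecreasing (BRA); the agent's choice is ê(w) = max{e : U(w,e) is maximal} where U(w,e) = Σ_{j=1}^k f_e(j)·u(w(j)) − c(e), and the principal's expected net profit is V(w) = Σ_{j=1}^k f_{ê(w)}(j)·(π(j) − w(j)). Then for every 0 < η < 1/(4k) and every monotone-smooth H-bounded contract w, there exists an η-coarse 2H-bounded contract w' such that V(w) ≤ V(w') + 2·k·H·η. -/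
lemma sum_Icc_bot {m k : ℕ} (h : m ≤ k) (f : ℕ → ℝ) :
    ∑ i ∈ Finset.Icc m k, f i = f m + ∑ i ∈ Finset.Icc (m+1) k, f i := by
  rw [Finset.Icc_add_one_left_eq_Ioc, ← Finset.Ioc_insert_left h, Finset.sum_insert (by simp)]

lemma abel_core (k : ℕ) (d g : ℕ → ℝ)
    (hg : ∀ i, 1 ≤ i → i + 1 ≤ k → g i ≤ g (i+1))
    (hT : ∀ j, 1 ≤ j → j ≤ k → 0 ≤ ∑ i ∈ Finset.Icc j k, d i) :
    ∀ t m, m + t = k → 1 ≤ m →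
      g m * ∑ i ∈ Finset.Icc m k, d i ≤ ∑ i ∈ Finset.Icc m k, d i * g i := by
  intro t
  induction t with
  | zero =>
    intro m hm h1
    subst hm
    simp [mul_comm]
  | succ t ih =>
    intro m hm h1
    have hmk : m ≤ k := by omega
    have h2 : m + 1 ≤ k := by omega
    rw [sum_Icc_bot hmk, sum_Icc_bot hmk]
    have ih' := ih (m+1) (by omega) (by omega)
    have hTm := hT (m+1) (by omega) h2
    have hgm := hg m h1 h2
    have : g m * ∑ i ∈ Finset.Icc (m+1) k, d i ≤ g (m+1) * ∑ i ∈ Finset.Icc (m+1) k, d i :=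
      mul_le_mul_of_nonneg_right hgm hTm
    nlinarith [ih']

lemma abel_le (k : ℕ) (hk : 1 ≤ k) (p q g : ℕ → ℝ)
    (hg : ∀ i, 1 ≤ i → i + 1 ≤ k → g i ≤ g (i+1))
    (htail : ∀ j, 1 ≤ j → j ≤ k → ∑ i ∈ Finset.Icc j k, q i ≤ ∑ i ∈ Finset.Icc j k, p i)
    (hsum : ∑ i ∈ Finset.Icc 1 k, p i = ∑ i ∈ Finset.Icc 1 k, q i) :
    ∑ i ∈ Finset.Icc 1 k, q i * g i ≤ ∑ i ∈ Finset.Icc 1 k, p i * g i := by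
  have h := abel_core k (fun i => p i - q i) g hg
    (fun j h1 h2 => by
      rw [Finset.sum_sub_distrib]
      have := htail j h1 h2
      linarith)
    (k - 1) 1 (by omega) le_rfl
  rw [Finset.sum_sub_distrib] at h
  simp only [sub_mul, Finset.sum_sub_distrib] at h
  rw [hsum] at h
  simp at h
  linarith

lemma exp_bound {ε : ℝ} (h0 : 0 ≤ ε) (h1 : ε ≤ 1/4) : Real.exp ε ≤ 1 + 2 * ε := by
  have h2 : (-ε) + 1 ≤ Real.exp (-ε) := Real.add_one_le_exp (-ε)
  have h3 : Real.exp ε * Real.exp (-ε) = 1 := by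
    rw [← Real.exp_add]; simp
  have h4 : Real.exp ε * (1 - ε) ≤ 1 := by
    calc Real.exp ε * (1 - ε) ≤ Real.exp ε * Real.exp (-ε) :=
          mul_le_mul_of_nonneg_left (by linarith) (Real.exp_pos ε).le
    _ = 1 := h3
  nlinarith [Real.exp_pos ε]

lemma round_up {η a : ℝ} (hη : 0 < η) (ha : 0 ≤ a) :
    a ≤ η * (⌈a/η⌉₊ : ℝ) ∧ η * (⌈a/η⌉₊ : ℝ) ≤ a + η := by
  constructor
  · have h := Nat.le_ceil (a/η)
    have := (div_le_iff₀ hη).1 h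
    linarith
  · have h := Nat.ceil_lt_add_one (div_nonneg ha hη.le)
    have h5 : a/η*η = a := div_mul_cancel₀ a hη.ne'
    nlinarith [mul_lt_mul_of_pos_right h hη]

lemma shift_mono (u u' : ℝ → ℝ)
    (hd : ∀ x > (0:ℝ), HasDerivAt u (u' x) x)
    (hbra : MonotoneOn (fun x : ℝ => x * u' x) (Set.Ioi (0 : ℝ)))
    {x y : ℝ} (hx : 0 < x) (hxy : x ≤ y) {s : ℝ} (hs : 0 ≤ s) :
    u y - u x ≤ u (y * Real.exp s) - u (x * Real.exp s) := by
  have hy : 0 < y := lt_of_lt_of_le hx hxy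
  set ψ : ℝ → ℝ := fun t => u (y * Real.exp t) - u (x * Real.exp t) with hψdef
  have hψ : ∀ t, HasDerivAt ψ
      (u' (y * Real.exp t) * (y * Real.exp t) - u' (x * Real.exp t) * (x * Real.exp t)) t := by
    intro t
    have hxt : 0 < x * Real.exp t := mul_pos hx (Real.exp_pos t)
    have hyt : 0 < y * Real.exp t := mul_pos hy (Real.exp_pos t)
    have h1 : HasDerivAt (fun t : ℝ => y * Real.exp t) (y * Real.exp t) t := by
      simpa using (Real.hasDerivAt_exp t).const_mul y
    have h2 : HasDerivAt (fun t : ℝ => x * Real.exp t) (x * Real.exp t) t := by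
      simpa using (Real.hasDerivAt_exp t).const_mul x
    exact ((hd _ hyt).comp t h1).sub ((hd _ hxt).comp t h2)
  have hmono : Monotone ψ := by
    apply monotone_of_deriv_nonneg
    · exact fun t => (hψ t).differentiableAt
    · intro t
      rw [(hψ t).deriv]
      have hxt : x * Real.exp t ∈ Set.Ioi (0:ℝ) := mul_pos hx (Real.exp_pos t)
      have hyt : y * Real.exp t ∈ Set.Ioi (0:ℝ) := mul_pos hy (Real.exp_pos t)
      have := hbra hxt hyt (mul_le_mul_of_nonneg_right hxy (Real.exp_pos t).le)
      simp only [] at this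
      nlinarith [this]
  have := hmono hs
  simpa [hψdef, Real.exp_zero] using this

/-- The principal's expected net profit from contract `w` when the agent chooses effort
`eHat w`: `V(w) = ∑ⱼ f_{ê(w)}(j)·(π(j) − w(j))`. -/
def principalProfit (k : ℕ) (f : ℕ → ℕ → ℝ) (π : ℕ → ℝ)
    (eHat : (ℕ → ℝ) → ℕ) (w : ℕ → ℝ) : ℝ :=
  ∑ j ∈ Finset.Icc 1 k, f (eHat w) j * (π j - w j)

/-- Discretization theorem: under FOSD, tie-breaking towards higher effort, and bounded
risk aversion, for every `0 < η < 1/(4k)` and every monotone-smooth `H`-bounded contract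
`w` there is an `η`-coarse `2H`-bounded contract `w'` with `V(w) ≤ V(w') + 2kHη`. -/
theorem discretization_theorem (k n : ℕ) (H w₀ : ℝ) (hw₀ : 0 < w₀) (hH : 0 < H)
    (π : ℕ → ℝ) (hπ1 : 0 < π 1)
    (hπmono : ∀ i ∈ Finset.Icc 1 (k - 1), π i < π (i + 1)) (hπH : π k ≤ H)
    (f : ℕ → ℕ → ℝ) (c : ℕ → ℝ)
    (hprob : ∀ e ≤ n, (∀ i ∈ Finset.Icc 1 k, 0 ≤ f e i) ∧
      ∑ i ∈ Finset.Icc 1 k, f e i = 1)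
    (hfosd : ∀ e ≤ n, ∀ e' ≤ n, e' < e → ∀ j ∈ Finset.Icc 1 k,
      ∑ i ∈ Finset.Icc j k, f e' i ≤ ∑ i ∈ Finset.Icc j k, f e i)
    (u u' : ℝ → ℝ) (humono : MonotoneOn u (Set.Ioi (0 : ℝ)))
    (hd : ∀ x > (0 : ℝ), HasDerivAt u (u' x) x)
    (hbra : MonotoneOn (fun x : ℝ => x * u' x) (Set.Ioi (0 : ℝ)))
    (eHat : (ℕ → ℝ) → ℕ)
    (heHat : ∀ w : ℕ → ℝ, eHat w ≤ n ∧
      (∀ e ≤ n, agentUtility k f c u w e ≤ agentUtility k f c u w (eHat w)) ∧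
      (∀ e ≤ n, agentUtility k f c u w e = agentUtility k f c u w (eHat w) →
        e ≤ eHat w))
    (η : ℝ) (hη : 0 < η) (hηk : η < 1 / (4 * k))
    (w : ℕ → ℝ)
    (hms : ∀ i ∈ Finset.Icc 1 (k - 1),
      0 ≤ w (i + 1) - w i ∧ w (i + 1) - w i ≤ π (i + 1) - π i)
    (hbd : ∀ i ∈ Finset.Icc 1 k, w₀ ≤ w i ∧ w i ≤ H) :
    ∃ w' : ℕ → ℝ,
      (∃ l : ℕ → ℕ, w' 1 = w₀ * Real.exp (η * l 0) ∧
        ∀ i ∈ Finset.Icc 1 (k - 1), w' (i + 1) = w' i * Real.exp (η * l i)) ∧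
      (∀ i ∈ Finset.Icc 1 k, w₀ ≤ w' i ∧ w' i ≤ 2 * H) ∧
      principalProfit k f π eHat w ≤
        principalProfit k f π eHat w' + 2 * k * H * η := by
  -- dispose of k = 0
  rcases Nat.eq_zero_or_pos k with hk0 | hk
  · subst hk0
    norm_num at hηk
    linarith
  have hk1 : (1:ℝ) ≤ (k:ℝ) := by exact_mod_cast hk
  have hkη : (k:ℝ) * η ≤ 1/4 := by
    have h4k : (0:ℝ) < 4 * k := by linarith
    rw [lt_div_iff₀ h4k] at hηk
    nlinarith
  -- basic wage facts
  have hbd' : ∀ i, 1 ≤ i → i ≤ k → w₀ ≤ w i ∧ w i ≤ H := fun i h1 h2 =>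
    hbd i (Finset.mem_Icc.2 ⟨h1, h2⟩)
  have hwpos : ∀ i, 1 ≤ i → i ≤ k → 0 < w i := fun i h1 h2 =>
    lt_of_lt_of_le hw₀ (hbd' i h1 h2).1
  have hwmono : ∀ i, 1 ≤ i → i + 1 ≤ k → w i ≤ w (i+1) := by
    intro i h1 h2
    have := (hms i (Finset.mem_Icc.2 ⟨h1, by omega⟩)).1
    linarith
  -- define the coarse contract
  set L : ℕ → ℝ := fun i => Real.log (w i / w₀) with hLdef
  set l : ℕ → ℕ := fun i => if i = 0 then ⌈L 1 / η⌉₊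
    else ⌈Real.log (w (i+1) / w i) / η⌉₊ with hldef
  set A : ℕ → ℝ := fun i => η * ∑ j ∈ Finset.range i, (l j : ℝ) with hAdef
  set W : ℕ → ℝ := fun i => w₀ * Real.exp (A i) with hWdef
  have hA1 : A 1 = η * (l 0 : ℝ) := by simp [hAdef]
  have hAstep : ∀ i, A (i+1) = A i + η * (l i : ℝ) := by
    intro i
    simp only [hAdef, Finset.sum_range_succ]
    ring
  have hWstep : ∀ i, W (i+1) = W i * Real.exp (η * (l i : ℝ)) := by
    intro i
    simp only [hWdef, hAstep, Real.exp_add]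
    ring
  -- rounding bounds for the first step
  have hL1 : 0 ≤ L 1 := Real.log_nonneg ((one_le_div hw₀).2 (hbd' 1 le_rfl hk).1)
  have hr0 : L 1 ≤ η * (l 0 : ℝ) ∧ η * (l 0 : ℝ) ≤ L 1 + η := by
    simp only [hldef, if_pos rfl]
    exact round_up hη hL1
  -- rounding bounds for subsequent steps
  have hrstep : ∀ i, 1 ≤ i → i + 1 ≤ k →
      Real.log (w (i+1) / w i) ≤ η * (l i : ℝ) ∧
      η * (l i : ℝ) ≤ Real.log (w (i+1) / w i) + η := by
    intro i h1 h2
    have hr : 0 ≤ Real.log (w (i+1) / w i) :=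
      Real.log_nonneg ((one_le_div (hwpos i h1 (by omega))).2 (hwmono i h1 h2))
    simp only [hldef, if_neg (by omega : ¬ i = 0)]
    exact round_up hη hr
  -- telescoping of logs
  have hLstep : ∀ i, 1 ≤ i → i + 1 ≤ k → L (i+1) = L i + Real.log (w (i+1) / w i) := by
    intro i h1 h2
    have hwi := hwpos i h1 (by omega)
    have hwi1 := hwpos (i+1) (by omega) h2
    simp only [hLdef]
    rw [Real.log_div hwi1.ne' hw₀.ne', Real.log_div hwi.ne' hw₀.ne',
      Real.log_div hwi1.ne' hwi.ne']
    ring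
  -- main sandwich bound, by induction
  have hAB : ∀ i, 1 ≤ i → i ≤ k → L i ≤ A i ∧ A i ≤ L i + (i:ℝ) * η := by
    intro i
    induction i with
    | zero => omega
    | succ i ih =>
      intro _ hik
      rcases Nat.eq_zero_or_pos i with hi0 | hi1
      · subst hi0
        rw [hA1]
        push_cast
        exact ⟨hr0.1, by linarith [hr0.2]⟩
      · have hihyp := ih hi1 (by omega)
        have hstep := hrstep i hi1 hik
        have hL := hLstep i hi1 hik
        rw [hAstep, hL]
        push_cast
        constructor <;> linarith [hihyp.1, hihyp.2, hstep.1, hstep.2]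
  -- w in exponential form
  have hwrep : ∀ i, 1 ≤ i → i ≤ k → w i = w₀ * Real.exp (L i) := by
    intro i h1 h2
    simp only [hLdef]
    rw [Real.exp_log (div_pos (hwpos i h1 h2) hw₀)]
    field_simp
  -- pointwise bounds on W
  have hWge : ∀ i, 1 ≤ i → i ≤ k → w i ≤ W i := by
    intro i h1 h2
    rw [hwrep i h1 h2]
    simp only [hWdef]
    exact mul_le_mul_of_nonneg_left (Real.exp_le_exp.2 (hAB i h1 h2).1) hw₀.le
  have hWle : ∀ i, 1 ≤ i → i ≤ k → W i ≤ w i * (1 + 2 * ((k:ℝ) * η)) := by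
    intro i h1 h2
    have hAi : A i ≤ L i + (k:ℝ) * η := by
      have := (hAB i h1 h2).2
      have hik : (i:ℝ) ≤ (k:ℝ) := by exact_mod_cast h2
      nlinarith
    have he1 : Real.exp (A i) ≤ Real.exp (L i) * Real.exp ((k:ℝ) * η) := by
      rw [← Real.exp_add]
      exact Real.exp_le_exp.2 hAi
    have he2 : Real.exp ((k:ℝ) * η) ≤ 1 + 2 * ((k:ℝ) * η) :=
      exp_bound (by positivity) hkη
    calc W i = w₀ * Real.exp (A i) := rfl
    _ ≤ w₀ * (Real.exp (L i) * Real.exp ((k:ℝ) * η)) :=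
        mul_le_mul_of_nonneg_left he1 hw₀.le
    _ = (w₀ * Real.exp (L i)) * Real.exp ((k:ℝ) * η) := by ring
    _ = w i * Real.exp ((k:ℝ) * η) := by rw [← hwrep i h1 h2]
    _ ≤ w i * (1 + 2 * ((k:ℝ) * η)) :=
        mul_le_mul_of_nonneg_left he2 (hwpos i h1 h2).le
  have hWbd : ∀ i, 1 ≤ i → i ≤ k → w₀ ≤ W i ∧ W i ≤ 2 * H := by
    intro i h1 h2
    constructor
    · exact le_trans (hbd' i h1 h2).1 (hWge i h1 h2)
    · have := hWle i h1 h2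
      have hwi := (hbd' i h1 h2).2
      have hwip := hwpos i h1 h2
      nlinarith
  have hWdiff : ∀ i, 1 ≤ i → i ≤ k → W i - w i ≤ 2 * (k:ℝ) * H * η := by
    intro i h1 h2
    have := hWle i h1 h2
    have hwi := (hbd' i h1 h2).2
    have hwip := hwpos i h1 h2
    have hkη0 : (0:ℝ) ≤ (k:ℝ) * η := by positivity
    nlinarith [mul_le_mul_of_nonneg_right hwi hkη0]
  have hWpos : ∀ i, 1 ≤ i → i ≤ k → 0 < W i := fun i h1 h2 =>
    lt_of_lt_of_le hw₀ (hWbd i h1 h2).1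
  -- monotonicity of the utility gains δ i = u (W i) - u (w i)
  have hδmono : ∀ i, 1 ≤ i → i + 1 ≤ k →
      u (W i) - u (w i) ≤ u (W (i+1)) - u (w (i+1)) := by
    intro i h1 h2
    have hik : i ≤ k := by omega
    set s : ℝ := A i - L i with hsdef
    have hs : 0 ≤ s := by
      have := (hAB i h1 hik).1; simp only [hsdef]; linarith
    have he1 : w i * Real.exp s = W i := by
      rw [hwrep i h1 hik]
      simp only [hWdef, hsdef, mul_assoc, ← Real.exp_add]
      ring_nf
    have hkey := shift_mono u u' hd hbra (hwpos i h1 hik) (hwmono i h1 h2) hs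
    rw [he1] at hkey
    -- now bound u (w (i+1) * exp s) by u (W (i+1))
    have hεmono : L (i+1) + s ≤ A (i+1) := by
      have hL := hLstep i h1 h2
      have hA := hAstep i
      have hr := (hrstep i h1 h2).1
      simp only [hsdef]
      linarith
    have he3 : w (i+1) * Real.exp s ≤ W (i+1) := by
      rw [hwrep (i+1) (by omega) h2]
      simp only [hWdef, mul_assoc, ← Real.exp_add]
      exact mul_le_mul_of_nonneg_left (Real.exp_le_exp.2 hεmono) hw₀.le
    have hu3 : u (w (i+1) * Real.exp s) ≤ u (W (i+1)) := by
      apply humono _ _ he3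
      · exact Set.mem_Ioi.2 (mul_pos (hwpos (i+1) (by omega) h2) (Real.exp_pos s))
      · exact Set.mem_Ioi.2 (hWpos (i+1) (by omega) h2)
    linarith
  -- utility difference identity
  have hDiff : ∀ e, agentUtility k f c u W e - agentUtility k f c u w e =
      ∑ j ∈ Finset.Icc 1 k, f e j * (u (W j) - u (w j)) := by
    intro e
    simp only [agentUtility, mul_sub, Finset.sum_sub_distrib]
    ring
  -- FOSD: utility gains are larger for higher efforts
  have hDmono : ∀ ea eb, ea ≤ n → eb ≤ n → eb < ea →
      ∑ j ∈ Finset.Icc 1 k, f eb j * (u (W j) - u (w j)) ≤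
      ∑ j ∈ Finset.Icc 1 k, f ea j * (u (W j) - u (w j)) := by
    intro ea eb hea heb hlt
    exact abel_le k hk (f ea) (f eb) (fun j => u (W j) - u (w j))
      (fun i h1 h2 => hδmono i h1 h2)
      (fun j h1 h2 => hfosd ea hea eb heb hlt j (Finset.mem_Icc.2 ⟨h1, h2⟩))
      ((hprob ea hea).2.trans (hprob eb heb).2.symm)
  -- effort does not decrease
  set e₀ := eHat w with he₀
  set e₁ := eHat W with he₁
  have he₀n : e₀ ≤ n := (heHat w).1
  have he₁n : e₁ ≤ n := (heHat W).1
  have he01 : e₀ ≤ e₁ := by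
    by_contra hcon
    push_neg at hcon
    have h1 : agentUtility k f c u w e₁ ≤ agentUtility k f c u w e₀ :=
      (heHat w).2.1 e₁ he₁n
    have h2 := hDmono e₀ e₁ he₀n he₁n hcon
    have h3 : agentUtility k f c u W e₀ ≤ agentUtility k f c u W e₁ :=
      (heHat W).2.1 e₀ he₀n
    have hd0 := hDiff e₀
    have hd1 := hDiff e₁
    have heq : agentUtility k f c u W e₀ = agentUtility k f c u W e₁ := by linarith
    have := (heHat W).2.2 e₀ he₀n heq
    omega
  -- final chain of inequalities
  have hf1nonneg : ∀ j ∈ Finset.Icc 1 k, 0 ≤ f e₁ j := (hprob e₁ he₁n).1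
  have hstep1 : ∑ j ∈ Finset.Icc 1 k, f e₀ j * (π j - w j) ≤
      ∑ j ∈ Finset.Icc 1 k, f e₁ j * (π j - w j) := by
    rcases eq_or_lt_of_le he01 with heq | hlt
    · rw [heq]
    · exact abel_le k hk (f e₁) (f e₀) (fun j => π j - w j)
        (fun i h1 h2 => by
          have := (hms i (Finset.mem_Icc.2 ⟨h1, by omega⟩)).2
          show π i - w i ≤ π (i+1) - w (i+1)
          linarith)
        (fun j h1 h2 => hfosd e₁ he₁n e₀ he₀n hlt j (Finset.mem_Icc.2 ⟨h1, h2⟩))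
        ((hprob e₁ he₁n).2.trans (hprob e₀ he₀n).2.symm)
  have hstep2 : ∑ j ∈ Finset.Icc 1 k, f e₁ j * (π j - w j) ≤
      (∑ j ∈ Finset.Icc 1 k, f e₁ j * (π j - W j)) + 2 * (k:ℝ) * H * η := by
    have hsum : ∑ j ∈ Finset.Icc 1 k, f e₁ j * (π j - w j) -
        ∑ j ∈ Finset.Icc 1 k, f e₁ j * (π j - W j) =
        ∑ j ∈ Finset.Icc 1 k, f e₁ j * (W j - w j) := by
      rw [← Finset.sum_sub_distrib]
      congr 1
      ext j
      ring
    have hbound : ∑ j ∈ Finset.Icc 1 k, f e₁ j * (W j - w j) ≤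
        ∑ j ∈ Finset.Icc 1 k, f e₁ j * (2 * (k:ℝ) * H * η) := by
      apply Finset.sum_le_sum
      intro j hj
      rw [Finset.mem_Icc] at hj
      exact mul_le_mul_of_nonneg_left (hWdiff j hj.1 hj.2)
        (hf1nonneg j (Finset.mem_Icc.2 hj))
    have hconst : ∑ j ∈ Finset.Icc 1 k, f e₁ j * (2 * (k:ℝ) * H * η) =
        2 * (k:ℝ) * H * η := by
      rw [← Finset.sum_mul, (hprob e₁ he₁n).2, one_mul]
    linarith
  refine ⟨W, ⟨l, ?_, ?_⟩, ?_, ?_⟩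
  · simp only [hWdef, hA1]
  · intro i _
    exact hWstep i
  · intro i hi
    rw [Finset.mem_Icc] at hi
    exact hWbd i hi.1 hi.2
  · show ∑ j ∈ Finset.Icc 1 k, f e₀ j * (π j - w j) ≤
      (∑ j ∈ Finset.Icc 1 k, f e₁ j * (π j - W j)) + 2 * (k:ℝ) * H * η
    linarith
end
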